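/- For the star K_{1,n} (n ≥ 1), the indicated domination number equals n, while the game domination number equals 1; hence γᵢ(K_{1,n}) − γ_g(K_{1,n}) = n − 1 can be arbitrarily large. -/

import Mathlib

open Finset

open scoped Classical

noncomputable section

namespace IndicatedDom

variable {V : Type*} [Fintype V]

/-- Closed neighborhood `N[v]` as a `Finset`. -/
def cnbhd (G : SimpleGraph V) (v : V) : Finset V :=
  insert v (G.neighborFinset v)

/-- `D` is a dominating set of `G`. -/
def Dominates (G : SimpleGraph V) (D : Finset V) : Prop :=
  ∀ u, ∃ v ∈ D, u ∈ cnbhd G v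

/-- The set of vertices not dominated by `D`. -/
def undom (G : SimpleGraph V) (D : Finset V) : Finset V :=
  univ.filter fun u => ∀ v ∈ D, u ∉ cnbhd G v

/-- Game value of the indicated domination game with a fuel parameter:
given the set `D` of vertices selected so far, Dominator indicates an
undominated vertex `u` (minimizing), Staller selects a vertex of `N[u]`
(maximizing); each selection counts one. -/
def giAux (G : SimpleGraph V) : ℕ → Finset V → ℕ
  | 0, _ => 0
  | (fuel+1), D =>
    if h : (undom G D).Nonempty then
      (undom G D).inf' h fun u =>
        (cnbhd G u).sup' ⟨u, Finset.mem_insert_self u _⟩ fun v => giAux G fuel (insert v D) + 1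
    else 0

/-- The indicated domination number `γᵢ(G)`. -/
def indicatedDomNum (G : SimpleGraph V) : ℕ :=
  giAux G (Fintype.card V) ∅

/-- Game value of the standard domination game with a fuel parameter:
`dom = true` means it is Dominator's turn (minimizing); legal moves are
vertices dominating at least one new vertex. -/
def gameAux (G : SimpleGraph V) : ℕ → Bool → Finset V → ℕ
  | 0, _, _ => 0
  | (fuel+1), dom, D =>
    if h : (univ.filter fun v => ∃ u ∈ cnbhd G v, u ∈ undom G D).Nonempty then
      if dom then
        (univ.filter fun v => ∃ u ∈ cnbhd G v, u ∈ undom G D).inf' h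
          fun v => gameAux G fuel false (insert v D) + 1
      else
        (univ.filter fun v => ∃ u ∈ cnbhd G v, u ∈ undom G D).sup' h
          fun v => gameAux G fuel true (insert v D) + 1
    else 0

/-- The game domination number `γ_g(G)` (Dominator starts). -/
def gameDomNum (G : SimpleGraph V) : ℕ :=
  gameAux G (Fintype.card V) true ∅

/-- A minimal dominating set. -/
def IsMinimalDominating (G : SimpleGraph V) (D : Finset V) : Prop :=
  Dominates G D ∧ ∀ D' ⊂ D, ¬ Dominates G D'

/-- The upper domination number `Γ(G)`. -/
def upperDomNum (G : SimpleGraph V) : ℕ :=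
  sSup {k | ∃ D : Finset V, IsMinimalDominating G D ∧ D.card = k}

/-- A dominating (Grundy) sequence: every vertex dominates something new,
and the whole sequence dominates `G`. -/
def IsDominatingSeq (G : SimpleGraph V) (l : List V) : Prop :=
  (∀ i : Fin l.length, ∃ u, u ∈ cnbhd G (l.get i) ∧
      ∀ j : Fin l.length, (j : ℕ) < (i : ℕ) → u ∉ cnbhd G (l.get j)) ∧
    Dominates G l.toFinset

/-- The Grundy domination number `γ_gr(G)`. -/
def grundyDomNum (G : SimpleGraph V) : ℕ :=
  sSup {k | ∃ l : List V, IsDominatingSeq G l ∧ l.length = k}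

/-- The independence number `α(G)`. -/
def indepNum (G : SimpleGraph V) : ℕ :=
  sSup {k | ∃ S : Finset V, (∀ x ∈ S, ∀ y ∈ S, ¬ G.Adj x y) ∧ S.card = k}

/-- `S` is irredundant: every `x ∈ S` has a private neighbor w.r.t. `S`. -/
def Irredundant (G : SimpleGraph V) (S : Finset V) : Prop :=
  ∀ x ∈ S, ∃ w, (∃ v ∈ S, w ∈ cnbhd G v) ∧ ¬ ∃ v ∈ S.erase x, w ∈ cnbhd G v

/-- The upper irredundance number `IR(G)`. -/
def upperIrredNum (G : SimpleGraph V) : ℕ :=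
  sSup {k | ∃ S : Finset V, Irredundant G S ∧ (∀ T, S ⊂ T → ¬ Irredundant G T) ∧ S.card = k}

/-- The star `K_{1,n}` with center `0`. -/
def starGraph (n : ℕ) : SimpleGraph (Fin (n+1)) where
  Adj a b := a ≠ b ∧ (a = 0 ∨ b = 0)
  symm := ⟨by intro a b h; exact ⟨h.1.symm, h.2.symm⟩⟩
  loopless := ⟨by intro a h; exact h.1 rfl⟩

/-- Two copies of `K_n` with a matching joining corresponding vertices of
index `≥ 1` (i.e. `K_n □ K₂` minus the matching edge at index `0`). -/
def Hgraph (n : ℕ) : SimpleGraph (Fin n × Bool) where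
  Adj a b := (a.2 = b.2 ∧ a.1 ≠ b.1) ∨ (a.2 ≠ b.2 ∧ a.1 = b.1 ∧ (a.1 : ℕ) ≠ 0)
  symm := ⟨by
    rintro ⟨i, s⟩ ⟨j, t⟩ (⟨h1, h2⟩ | ⟨h1, h2, h3⟩)
    · exact Or.inl ⟨h1.symm, h2.symm⟩
    · exact Or.inr ⟨h1.symm, h2.symm, h2 ▸ h3⟩⟩
  loopless := ⟨by rintro ⟨i, s⟩ (⟨_, h⟩ | ⟨h, _⟩) <;> exact h rfl⟩

/-- The `k`-th power of the path on `n` vertices: `i ~ j` iff `1 ≤ |i-j| ≤ k`. -/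
def pathPow (n k : ℕ) : SimpleGraph (Fin n) where
  Adj i j := i ≠ j ∧ (i : ℕ) ≤ (j : ℕ) + k ∧ (j : ℕ) ≤ (i : ℕ) + k
  symm := ⟨by intro i j h; exact ⟨h.1.symm, h.2.2, h.2.1⟩⟩
  loopless := ⟨by intro i h; exact h.1 rfl⟩

/-- The cycle on `m` vertices (for `m ≥ 3`), modeled on `ZMod m`. -/
def cyc (m : ℕ) : SimpleGraph (ZMod m) where
  Adj i j := i ≠ j ∧ (i + 1 = j ∨ j + 1 = i)
  symm := ⟨by intro i j h; exact ⟨h.1.symm, h.2.symm⟩⟩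
  loopless := ⟨by intro i h; exact h.1 rfl⟩

/-- The graph `D₁`: a `9`-cycle `x₁x₂…x₉` plus chords `x₁x₃, x₄x₆, x₇x₉`
(vertex `xᵢ` is represented by `i - 1 : ZMod 9`). -/
def DGraph : SimpleGraph (ZMod 9) where
  Adj i j := i ≠ j ∧ (i + 1 = j ∨ j + 1 = i ∨
    (i = 0 ∧ j = 2) ∨ (i = 2 ∧ j = 0) ∨ (i = 3 ∧ j = 5) ∨ (i = 5 ∧ j = 3) ∨
    (i = 6 ∧ j = 8) ∨ (i = 8 ∧ j = 6))
  symm := ⟨by intro i j h; refine ⟨h.1.symm, ?_⟩; tauto⟩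
  loopless := ⟨by intro i h; exact h.1 rfl⟩

/-!
In `K_{1,n}` the centre dominates every vertex, so in the domination game Dominator finishes
with his first move. In the indicated game, as long as some leaf is undominated every position
looks the same: Dominator must indicate an undominated vertex, and Staller can always answer
with an undominated leaf (the indicated leaf itself, or any leaf when the centre is indicated),
which dominates exactly one new vertex. Hence Staller forces all `n` leaves to be selected,
while selecting the centre would end the game at once.
-/

section General

variable {V : Type*} [Fintype V] {G : SimpleGraph V}

lemma mem_cnbhd_self (u : V) : u ∈ cnbhd G u :=
  mem_insert_self u _

lemma mem_cnbhd_comm {u v : V} : u ∈ cnbhd G v ↔ v ∈ cnbhd G u := by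
  simp only [cnbhd, mem_insert, SimpleGraph.mem_neighborFinset, G.adj_comm, eq_comm]

lemma mem_undom {D : Finset V} {u : V} : u ∈ undom G D ↔ ∀ v ∈ D, u ∉ cnbhd G v := by
  simp [undom]

lemma undom_empty : undom G ∅ = univ := by
  ext u
  simp [mem_undom]

lemma undom_insert_eq_empty_of_cnbhd_eq_univ {v : V} (hv : cnbhd G v = univ) (D : Finset V) :
    undom G (insert v D) = ∅ :=
  eq_empty_iff_forall_notMem.mpr fun u hu =>
    mem_undom.mp hu v (mem_insert_self v D) (hv ▸ mem_univ u)

lemma card_insert_of_mem_cnbhd_of_mem_undom {D : Finset V} {u v : V} (hu : u ∈ undom G D)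
    (hv : v ∈ cnbhd G u) : #(insert v D) = #D + 1 :=
  card_insert_of_notMem fun hvD => mem_undom.mp hu v hvD (mem_cnbhd_comm.mp hv)

lemma giAux_eq_zero_of_undom_eq_empty {D : Finset V} (h : undom G D = ∅) (fuel : ℕ) :
    giAux G fuel D = 0 := by
  cases fuel <;> simp [giAux, h]

lemma giAux_succ_eq_of_forall_undom {D : Finset V} {fuel m : ℕ} (h : (undom G D).Nonempty)
    (hle : ∀ u ∈ undom G D, ∀ v ∈ cnbhd G u, giAux G fuel (insert v D) + 1 ≤ m)
    (hreply : ∀ u ∈ undom G D, ∃ v ∈ cnbhd G u, giAux G fuel (insert v D) + 1 = m) :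
    giAux G (fuel + 1) D = m := by
  have hsup : ∀ u ∈ undom G D, ((cnbhd G u).sup' ⟨u, mem_cnbhd_self u⟩
      fun v => giAux G fuel (insert v D) + 1) = m := fun u hu =>
    le_antisymm (sup'_le _ _ (hle u hu))
      (let ⟨v, hv, hvm⟩ := hreply u hu; le_sup'_of_le _ hv hvm.ge)
  rw [giAux, dif_pos h]
  obtain ⟨u, hu⟩ := h
  exact le_antisymm ((inf'_le _ hu).trans_eq (hsup u hu)) (le_inf' _ _ fun u hu => (hsup u hu).ge)

lemma gameAux_eq_zero_of_undom_eq_empty {D : Finset V} (h : undom G D = ∅) (fuel : ℕ)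
    (dom : Bool) : gameAux G fuel dom D = 0 := by
  cases fuel <;> simp [gameAux, h]

lemma gameDomNum_eq_one_of_cnbhd_eq_univ {v : V} (hv : cnbhd G v = univ) :
    gameDomNum G = 1 := by
  obtain ⟨k, hk⟩ := Nat.exists_eq_succ_of_ne_zero (Fintype.card_pos_iff.mpr ⟨v⟩).ne'
  have hv_legal : v ∈ univ.filter fun w => ∃ u ∈ cnbhd G w, u ∈ undom G ∅ := by
    simp only [undom_empty, mem_filter, mem_univ, true_and]
    exact ⟨v, mem_cnbhd_self v, trivial⟩
  rw [gameDomNum, hk, gameAux, dif_pos ⟨v, hv_legal⟩, if_pos rfl]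
  refine le_antisymm ?_ (le_inf' _ _ fun w _ => Nat.le_add_left 1 _)
  refine (inf'_le _ hv_legal).trans_eq ?_
  rw [gameAux_eq_zero_of_undom_eq_empty (undom_insert_eq_empty_of_cnbhd_eq_univ hv ∅)]

end General

section Star

variable {n : ℕ}

lemma mem_cnbhd_starGraph {u v : Fin (n + 1)} :
    u ∈ cnbhd (starGraph n) v ↔ u = v ∨ v = 0 ∨ u = 0 := by
  simp only [cnbhd, mem_insert, SimpleGraph.mem_neighborFinset]
  change u = v ∨ (v ≠ u ∧ (v = 0 ∨ u = 0)) ↔ _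
  tauto

lemma cnbhd_starGraph_zero : cnbhd (starGraph n) 0 = univ :=
  eq_univ_of_forall fun _ => mem_cnbhd_starGraph.mpr (Or.inr (Or.inl rfl))

lemma exists_ne_zero_mem_cnbhd_starGraph (hn : 1 ≤ n) (u : Fin (n + 1)) :
    ∃ v ∈ cnbhd (starGraph n) u, v ≠ 0 := by
  by_cases hu : u = 0
  · refine ⟨Fin.last n, ?_, fun h => by simp [Fin.ext_iff] at h; omega⟩
    rw [hu, cnbhd_starGraph_zero]
    exact mem_univ _
  · exact ⟨u, mem_cnbhd_self u, hu⟩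

lemma card_le_of_zero_notMem {D : Finset (Fin (n + 1))} (h0 : 0 ∉ D) : #D ≤ n := by
  simpa using card_le_card (subset_erase.mpr ⟨subset_univ D, h0⟩)

lemma undom_starGraph_nonempty_iff (hn : 1 ≤ n) {D : Finset (Fin (n + 1))} (h0 : 0 ∉ D) :
    (undom (starGraph n) D).Nonempty ↔ #D < n := by
  constructor
  · rintro ⟨u, hu⟩
    by_cases hu0 : u = 0
    · have hD : D = ∅ := eq_empty_iff_forall_notMem.mpr fun v hv =>
        mem_undom.mp hu v hv (mem_cnbhd_starGraph.mpr (Or.inr (Or.inr hu0)))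
      simp [hD]; omega
    · have huD : u ∉ D := fun huD => mem_undom.mp hu u huD (mem_cnbhd_self u)
      have := card_le_of_zero_notMem (D := insert u D) (by simp [h0, Ne.symm hu0])
      rw [card_insert_of_notMem huD] at this
      omega
  · intro hD
    obtain ⟨u, hu, huD⟩ := exists_mem_notMem_of_card_lt_card
      (s := D) (t := univ.erase 0) (by simpa using hD)
    refine ⟨u, mem_undom.mpr fun v hv huv => ?_⟩
    rcases mem_cnbhd_starGraph.mp huv with rfl | rfl | rfl
    · exact huD hv
    · exact h0 hv
    · simp at hu

lemma giAux_starGraph (hn : 1 ≤ n) (fuel : ℕ) (D : Finset (Fin (n + 1))) (h0 : 0 ∉ D) :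
    giAux (starGraph n) fuel D = min fuel (n - #D) := by
  induction fuel generalizing D with
  | zero => simp [giAux]
  | succ f ih =>
    by_cases h : (undom (starGraph n) D).Nonempty
    swap
    · rw [giAux_eq_zero_of_undom_eq_empty (not_nonempty_iff_eq_empty.mp h)]
      have := card_le_of_zero_notMem h0
      rw [undom_starGraph_nonempty_iff hn h0] at h
      omega
    have hlt := (undom_starGraph_nonempty_iff hn h0).mp h
    have hnext : ∀ E : Finset (Fin (n + 1)), 0 ∉ E → #E = #D + 1 →
        giAux (starGraph n) f E + 1 = min (f + 1) (n - #D) := by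
      intro E hE0 hE
      rw [ih E hE0, hE]
      omega
    refine giAux_succ_eq_of_forall_undom h (fun u hu v hv => ?_) fun u hu => ?_
    · by_cases hv0 : v = 0
      · rw [giAux_eq_zero_of_undom_eq_empty (undom_insert_eq_empty_of_cnbhd_eq_univ
          (hv0 ▸ cnbhd_starGraph_zero) D)]
        omega
      · exact (hnext _ (by simp [h0, Ne.symm hv0])
          (card_insert_of_mem_cnbhd_of_mem_undom hu hv)).le
    · obtain ⟨v, hv, hv0⟩ := exists_ne_zero_mem_cnbhd_starGraph hn u
      exact ⟨v, hv, hnext _ (by simp [h0, Ne.symm hv0])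
        (card_insert_of_mem_cnbhd_of_mem_undom hu hv)⟩

end Star

/-- for the star `K_{1,n}` (`n ≥ 1`), `γᵢ = n` and `γ_g = 1`. -/
theorem stmt2 (n : ℕ) (hn : 1 ≤ n) :
    indicatedDomNum (starGraph n) = n ∧ gameDomNum (starGraph n) = 1 := by
  refine ⟨?_, gameDomNum_eq_one_of_cnbhd_eq_univ cnbhd_starGraph_zero⟩
  rw [indicatedDomNum, Fintype.card_fin, giAux_starGraph hn _ ∅ (notMem_empty 0)]
  simp

end IndicatedDom
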